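/- Let d ≥ 2 and fix α ∈ (1, d). There exists R⋆ > 1 such that for every parameter λ₀ ∈ 𝒟 with R_{λ₀} ≥ R⋆ and [λ₀] ∉ E, there exists r(λ₀) > 1 with the following property: for every t ∈ ℂ with |t| ≥ r(λ₀), every n ≥ 1, every z with |z| = 1 and every c ∈ ℂ with q'_{tλ₀,z}(c) = 0, one has |Q^n_{tλ₀,z}(c)| ≥ 2·R_{tλ₀}^α. In particular the set S¹ × 𝔻_{R_{tλ₀}^α} is disjoint from the closure of the postcritical set ⋃_{n≥1} f_{tλ₀}^n(C_{tλ₀}), where C_μ := {(z,c) : |z| = 1 and q'_{μ,z}(c) = 0}. -/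

import Mathlib

noncomputable section

/-- The parameter space `ℂ^{D_d}` with the Euclidean norm, indexed by the pairs
`(j,k)` with `0 ≤ j ≤ d-2` and `0 ≤ k ≤ d-j` (so of dimension `D_d = (d-1)(d+4)/2`). -/
abbrev Param (d : ℕ) := EuclideanSpace ℂ (Σ j : Fin (d - 1), Fin (d - (j : ℕ) + 1))

/-- The fiber polynomial `q_{λ,z}(w) = w^d + Σ_{j=0}^{d-2} (Σ_{k=0}^{d-j} a_{j,k}^{d-j} z^k) w^j`. -/
def qpoly (d : ℕ) (lam : Param d) (z w : ℂ) : ℂ :=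
  w ^ d + ∑ j : Fin (d - 1),
    (∑ k : Fin (d - (j : ℕ) + 1), lam ⟨j, k⟩ ^ (d - (j : ℕ)) * z ^ (k : ℕ)) * w ^ (j : ℕ)

/-- Non-autonomous fiberwise iterates along the base `p(z) = z^d`:
`Q⁰ = id`, `Q^{n+1}_{λ,z} = q_{λ, z^{d^n}} ∘ Q^n_{λ,z}`. -/
def Qit (d : ℕ) (lam : Param d) (z : ℂ) : ℕ → ℂ → ℂ
  | 0, w => w
  | n + 1, w => qpoly d lam (z ^ d ^ n) (Qit d lam z n w)

/-- `R_λ = Σ_{j=0}^{d-2} (Σ_{k=0}^{d-j} |a_{j,k}|^{d-j})^{1/(d-j)}` (real powers). -/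
def Rlam (d : ℕ) (lam : Param d) : ℝ :=
  ∑ j : Fin (d - 1),
    (∑ k : Fin (d - (j : ℕ) + 1), ‖lam ⟨j, k⟩‖ ^ (d - (j : ℕ))) ^ (((d - (j : ℕ) : ℕ) : ℝ))⁻¹

/-- The escape locus `𝒟`: all fiberwise critical orbits over the circle are unbounded. -/
def Dset (d : ℕ) : Set (Param d) :=
  {lam | ∀ z : ℂ, ‖z‖ = 1 → ∀ c : ℂ,
    deriv (qpoly d lam z) c = 0 →
      ¬ Bornology.IsBounded (Set.range fun n => Qit d lam z n c)}

/-- `[λ] ∉ E`: for every `z` on the unit circle, `q_{λ,z}` and `q'_{λ,z}`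
have no common root. -/
def NotInE (d : ℕ) (lam : Param d) : Prop :=
  ∀ z : ℂ, ‖z‖ = 1 → ∀ c : ℂ,
    ¬(qpoly d lam z c = 0 ∧ deriv (qpoly d lam z) c = 0)

/-- The regular polynomial skew-product `f_λ(z,w) = (z^d, q_{λ,z}(w))`. -/
def fmap (d : ℕ) (lam : Param d) (p : ℂ × ℂ) : ℂ × ℂ := (p.1 ^ d, qpoly d lam p.1 p.2)

/-- The fiberwise critical set over the unit circle. -/
def CritSet (d : ℕ) (lam : Param d) : Set (ℂ × ℂ) :=
  {p | ‖p.1‖ = 1 ∧ deriv (qpoly d lam p.1) p.2 = 0}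

/-- The postcritical set `⋃_{n ≥ 1} f_λ^n(C_λ)`. -/
def PostCrit (d : ℕ) (lam : Param d) : Set (ℂ × ℂ) :=
  ⋃ n ∈ {n : ℕ | 1 ≤ n}, (fmap d lam)^[n] '' CritSet d lam

-- coefficient abbreviations
def coefB (d : ℕ) (lam : Param d) (z : ℂ) (j : Fin (d - 1)) : ℂ :=
  ∑ k : Fin (d - (j : ℕ) + 1), lam ⟨j, k⟩ ^ (d - (j : ℕ)) * z ^ (k : ℕ)

def coefS (d : ℕ) (lam : Param d) (j : Fin (d - 1)) : ℝ :=
  ∑ k : Fin (d - (j : ℕ) + 1), ‖lam ⟨j, k⟩‖ ^ (d - (j : ℕ))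

lemma qpoly_eq (d : ℕ) (lam : Param d) (z w : ℂ) :
    qpoly d lam z w = w ^ d + ∑ j : Fin (d - 1), coefB d lam z j * w ^ (j : ℕ) := rfl

lemma Rlam_eq (d : ℕ) (lam : Param d) :
    Rlam d lam = ∑ j : Fin (d - 1), (coefS d lam j) ^ (((d - (j : ℕ) : ℕ) : ℝ))⁻¹ := rfl

lemma coefS_nonneg (d : ℕ) (lam : Param d) (j : Fin (d - 1)) : 0 ≤ coefS d lam j :=
  Finset.sum_nonneg fun _ _ => pow_nonneg (norm_nonneg _) _

lemma Rlam_nonneg (d : ℕ) (lam : Param d) : 0 ≤ Rlam d lam := by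
  rw [Rlam_eq]
  exact Finset.sum_nonneg fun j _ => Real.rpow_nonneg (coefS_nonneg d lam j) _

lemma jlt (d : ℕ) (j : Fin (d - 1)) : (j : ℕ) + 2 ≤ d := by
  have := j.isLt; omega

lemma coefB_abs_le (d : ℕ) (lam : Param d) (z : ℂ) (hz : ‖z‖ = 1)
    (j : Fin (d - 1)) : ‖coefB d lam z j‖ ≤ coefS d lam j := by
  refine le_trans (norm_sum_le _ _) ?_
  apply Finset.sum_le_sum
  intro k _
  rw [norm_mul, norm_pow, norm_pow, hz, one_pow, mul_one]

lemma coefS_le_Rlam_pow (d : ℕ) (lam : Param d) (j : Fin (d - 1)) :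
    coefS d lam j ≤ Rlam d lam ^ (d - (j : ℕ)) := by
  have hj := jlt d j
  have hm0 : d - (j : ℕ) ≠ 0 := by omega
  have hmR : ((d - (j : ℕ) : ℕ) : ℝ) ≠ 0 := Nat.cast_ne_zero.mpr hm0
  have hS := coefS_nonneg d lam j
  have h1 : coefS d lam j ^ (((d - (j : ℕ) : ℕ) : ℝ))⁻¹ ≤ Rlam d lam := by
    rw [Rlam_eq]
    exact Finset.single_le_sum (f := fun j => (coefS d lam j) ^ (((d - (j : ℕ) : ℕ) : ℝ))⁻¹)
      (fun i _ => Real.rpow_nonneg (coefS_nonneg d lam i) _) (Finset.mem_univ j)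
  calc coefS d lam j
      = (coefS d lam j ^ (((d - (j : ℕ) : ℕ) : ℝ))⁻¹) ^ (d - (j : ℕ)) := by
        rw [← Real.rpow_natCast (coefS d lam j ^ (((d - (j : ℕ) : ℕ) : ℝ))⁻¹) (d - (j : ℕ)),
          ← Real.rpow_mul hS, inv_mul_cancel₀ hmR, Real.rpow_one]
    _ ≤ Rlam d lam ^ (d - (j : ℕ)) :=
        pow_le_pow_left₀ (Real.rpow_nonneg hS _) h1 _

lemma qpoly_hasDerivAt (d : ℕ) (lam : Param d) (z w : ℂ) :
    HasDerivAt (qpoly d lam z)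
      ((d : ℂ) * w ^ (d - 1) +
        ∑ j : Fin (d - 1), coefB d lam z j * ((j : ℕ) * w ^ ((j : ℕ) - 1))) w := by
  have h1 : HasDerivAt (fun w : ℂ => w ^ d) ((d : ℂ) * w ^ (d - 1)) w := hasDerivAt_pow d w
  have h2 : HasDerivAt (fun w : ℂ => ∑ j : Fin (d - 1), coefB d lam z j * w ^ (j : ℕ))
      (∑ j : Fin (d - 1), coefB d lam z j * ((j : ℕ) * w ^ ((j : ℕ) - 1))) w := by
    apply HasDerivAt.fun_sum
    intro j _
    exact (hasDerivAt_pow (j : ℕ) w).const_mul (coefB d lam z j)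
  exact h1.fun_add h2

lemma qpoly_deriv (d : ℕ) (lam : Param d) (z w : ℂ) :
    deriv (qpoly d lam z) w =
      (d : ℂ) * w ^ (d - 1) +
        ∑ j : Fin (d - 1), coefB d lam z j * ((j : ℕ) * w ^ ((j : ℕ) - 1)) :=
  (qpoly_hasDerivAt d lam z w).deriv

lemma smul_apply' (d : ℕ) (t : ℂ) (lam : Param d) (i : Σ j : Fin (d - 1), Fin (d - (j : ℕ) + 1)) :
    (t • lam) i = t * lam i := rfl

lemma coefB_smul (d : ℕ) (t : ℂ) (lam : Param d) (z : ℂ) (j : Fin (d - 1)) :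
    coefB d (t • lam) z j = t ^ (d - (j : ℕ)) * coefB d lam z j := by
  unfold coefB
  rw [Finset.mul_sum]
  apply Finset.sum_congr rfl
  intro k _
  rw [smul_apply', mul_pow]
  ring

lemma qpoly_smul (d : ℕ) (t : ℂ) (lam : Param d) (z w : ℂ) :
    qpoly d (t • lam) z (t * w) = t ^ d * qpoly d lam z w := by
  rw [qpoly_eq, qpoly_eq, mul_add, mul_pow, Finset.mul_sum]
  congr 1
  apply Finset.sum_congr rfl
  intro j _
  rw [coefB_smul, mul_pow]
  have : t ^ (d - (j : ℕ)) * t ^ (j : ℕ) = t ^ d := by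
    rw [← pow_add]
    congr 1
    have := jlt d j; omega
  calc t ^ (d - (j : ℕ)) * coefB d lam z j * (t ^ (j : ℕ) * w ^ (j : ℕ))
      = (t ^ (d - (j : ℕ)) * t ^ (j : ℕ)) * (coefB d lam z j * w ^ (j : ℕ)) := by ring
    _ = t ^ d * (coefB d lam z j * w ^ (j : ℕ)) := by rw [this]

lemma qderiv_smul (d : ℕ) (hd : 2 ≤ d) (t : ℂ) (lam : Param d) (z c : ℂ) :
    deriv (qpoly d (t • lam) z) (t * c) = t ^ (d - 1) * deriv (qpoly d lam z) c := by
  rw [qpoly_deriv, qpoly_deriv, mul_add, Finset.mul_sum]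
  congr 1
  · rw [mul_pow, ← mul_assoc, mul_comm ((d:ℂ)) (t ^ (d-1)), mul_assoc]
  · apply Finset.sum_congr rfl
    intro j _
    rw [coefB_smul]
    rcases Nat.eq_zero_or_pos (j : ℕ) with h0 | hpos
    · simp [h0]
    · rw [mul_pow]
      have hle := jlt d j
      have : t ^ (d - (j : ℕ)) * t ^ ((j : ℕ) - 1) = t ^ (d - 1) := by
        rw [← pow_add]; congr 1; omega
      calc t ^ (d - (j : ℕ)) * coefB d lam z j * (↑(j : ℕ) * (t ^ ((j:ℕ)-1) * c ^ ((j:ℕ)-1)))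
          = (t ^ (d - (j : ℕ)) * t ^ ((j:ℕ)-1)) * (coefB d lam z j * (↑(j : ℕ) * c ^ ((j:ℕ)-1))) := by
            ring
        _ = t ^ (d - 1) * (coefB d lam z j * (↑(j : ℕ) * c ^ ((j:ℕ)-1))) := by rw [this]

lemma Rlam_smul (d : ℕ) (t : ℂ) (lam : Param d) :
    Rlam d (t • lam) = ‖t‖ * Rlam d lam := by
  rw [Rlam_eq, Rlam_eq, Finset.mul_sum]
  apply Finset.sum_congr rfl
  intro j _
  have hj := jlt d j
  have hm0 : d - (j : ℕ) ≠ 0 := by omega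
  have hmR : ((d - (j : ℕ) : ℕ) : ℝ) ≠ 0 := Nat.cast_ne_zero.mpr hm0
  have hS : coefS d (t • lam) j = ‖t‖ ^ (d - (j : ℕ)) * coefS d lam j := by
    unfold coefS
    rw [Finset.mul_sum]
    apply Finset.sum_congr rfl
    intro k _
    rw [smul_apply']
    rw [norm_mul, mul_pow]
  rw [hS, Real.mul_rpow (pow_nonneg (norm_nonneg t) _) (coefS_nonneg d lam j)]
  congr 1
  rw [← Real.rpow_natCast (‖t‖) (d - (j : ℕ)), ← Real.rpow_mul (norm_nonneg t),
    mul_inv_cancel₀ hmR, Real.rpow_one]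

lemma half_sum (d : ℕ) (hd : 2 ≤ d) :
    ∑ j : Fin (d - 1), ((1 : ℝ) / 2) ^ (d - (j : ℕ)) ≤ 1 / 2 := by
  rw [Fin.sum_univ_eq_sum_range (fun j => ((1 : ℝ) / 2) ^ (d - j)) (d - 1)]
  rw [← Finset.sum_range_reflect]
  have heq : ∀ j ∈ Finset.range (d - 1),
      ((1 : ℝ) / 2) ^ (d - (d - 1 - 1 - j)) = (1/4 : ℝ) * (1/2) ^ j := by
    intro j hj
    rw [Finset.mem_range] at hj
    have : d - (d - 1 - 1 - j) = j + 2 := by omega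
    rw [this, pow_add]
    ring
  rw [Finset.sum_congr rfl heq, ← Finset.mul_sum]
  have := sum_geometric_two_le (d - 1)
  nlinarith [this]

lemma grow (d : ℕ) (hd : 2 ≤ d) (lam : Param d) (z w : ℂ) (hz : ‖z‖ = 1)
    (hw2 : 2 ≤ ‖w‖) (hwR : 2 * Rlam d lam ≤ ‖w‖) :
    ‖w‖ ≤ ‖qpoly d lam z w‖ := by
  set W := ‖w‖ with hW
  have hW0 : 0 < W := lt_of_lt_of_le two_pos hw2
  -- bound the sum term
  have hsum : ‖∑ j : Fin (d - 1), coefB d lam z j * w ^ (j : ℕ)‖ ≤ W ^ d / 2 := by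
    refine le_trans (norm_sum_le _ _) ?_
    have hterm : ∀ j : Fin (d - 1),
        ‖coefB d lam z j * w ^ (j : ℕ)‖ ≤ W ^ d * ((1:ℝ)/2) ^ (d - (j : ℕ)) := by
      intro j
      have hj := jlt d j
      rw [norm_mul, norm_pow]
      have h1 : ‖coefB d lam z j‖ ≤ (W / 2) ^ (d - (j : ℕ)) := by
        refine le_trans (coefB_abs_le d lam z hz j) ?_
        refine le_trans (coefS_le_Rlam_pow d lam j) ?_
        apply pow_le_pow_left₀ (Rlam_nonneg d lam)
        linarith
      calc ‖coefB d lam z j‖ * W ^ (j : ℕ)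
          ≤ (W / 2) ^ (d - (j : ℕ)) * W ^ (j : ℕ) := by
            apply mul_le_mul_of_nonneg_right h1 (pow_nonneg hW0.le _)
        _ = W ^ d * ((1:ℝ)/2) ^ (d - (j : ℕ)) := by
            rw [div_pow, div_pow, one_pow]
            field_simp
            rw [← pow_add]
            congr 2
            omega
    refine le_trans (Finset.sum_le_sum fun j _ => hterm j) ?_
    rw [← Finset.mul_sum]
    have := half_sum d hd
    have hWd : (0:ℝ) ≤ W ^ d := pow_nonneg hW0.le _
    nlinarith
  have hlow : W ^ d - W ^ d / 2 ≤ ‖qpoly d lam z w‖ := by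
    have habs : W ^ d ≤ ‖qpoly d lam z w‖ +
        ‖∑ j : Fin (d - 1), coefB d lam z j * w ^ (j : ℕ)‖ := by
      have : ‖w ^ d‖ ≤ ‖qpoly d lam z w‖ +
          ‖∑ j : Fin (d - 1), coefB d lam z j * w ^ (j : ℕ)‖ := by
        have hid : w ^ d = qpoly d lam z w -
            ∑ j : Fin (d - 1), coefB d lam z j * w ^ (j : ℕ) := by
          rw [qpoly_eq]; ring
        rw [hid, sub_eq_add_neg]
        refine le_trans (norm_add_le _ _) ?_
        simp
      simpa [norm_pow] using this
    linarith
  have hWd : W * 2 ≤ W ^ d := by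
    calc W * 2 ≤ W * W := by nlinarith
      _ = W ^ 2 := (sq W).symm
      _ ≤ W ^ d := pow_le_pow_right₀ (by linarith) hd
  linarith

lemma cont_qderiv (d : ℕ) (lam : Param d) :
    Continuous (fun p : ℂ × ℂ => deriv (qpoly d lam p.1) p.2) := by
  have heq : (fun p : ℂ × ℂ => deriv (qpoly d lam p.1) p.2) =
      fun p : ℂ × ℂ => (d : ℂ) * p.2 ^ (d - 1) +
        ∑ j : Fin (d - 1), coefB d lam p.1 j * ((j : ℕ) * p.2 ^ ((j : ℕ) - 1)) := by
    funext p; rw [qpoly_deriv]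
  rw [heq]
  unfold coefB
  fun_prop

lemma cont_qpoly (d : ℕ) (lam : Param d) :
    Continuous (fun p : ℂ × ℂ => qpoly d lam p.1 p.2) := by
  unfold qpoly
  fun_prop

lemma crit_bound (d : ℕ) (hd : 2 ≤ d) (lam : Param d) (z c : ℂ) (hz : ‖z‖ = 1)
    (hc : deriv (qpoly d lam z) c = 0) :
    ‖c‖ ≤ max 1 (∑ j : Fin (d - 1), (j : ℝ) * coefS d lam j) := by
  set C := ∑ j : Fin (d - 1), (j : ℝ) * coefS d lam j with hC
  have hC0 : 0 ≤ C :=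
    Finset.sum_nonneg fun j _ => mul_nonneg (Nat.cast_nonneg _) (coefS_nonneg d lam j)
  by_contra hcon
  push_neg at hcon
  have hc1 : 1 < ‖c‖ := lt_of_le_of_lt (le_max_left _ _) hcon
  have hcC : C < ‖c‖ := lt_of_le_of_lt (le_max_right _ _) hcon
  rw [qpoly_deriv] at hc
  have hid : (d : ℂ) * c ^ (d - 1) =
      -∑ j : Fin (d - 1), coefB d lam z j * ((j : ℕ) * c ^ ((j : ℕ) - 1)) := by
    linear_combination hc
  have habs : (d : ℝ) * ‖c‖ ^ (d - 1) ≤ C * ‖c‖ ^ (d - 2) := by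
    have h1 : ‖(d : ℂ) * c ^ (d - 1)‖ = (d : ℝ) * ‖c‖ ^ (d - 1) := by
      rw [norm_mul, norm_pow, Complex.norm_natCast]
    rw [← h1, hid, norm_neg]
    refine le_trans (norm_sum_le _ _) ?_
    rw [hC, Finset.sum_mul]
    apply Finset.sum_le_sum
    intro j _
    rw [norm_mul, norm_mul, norm_pow, Complex.norm_natCast]
    have hjd := jlt d j
    have h2 : ‖c‖ ^ ((j : ℕ) - 1) ≤ ‖c‖ ^ (d - 2) :=
      pow_le_pow_right₀ hc1.le (by omega)
    have h3 := coefB_abs_le d lam z hz j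
    have h4 : (0:ℝ) ≤ (j:ℝ) := Nat.cast_nonneg _
    have h5 : (0:ℝ) ≤ ‖c‖ ^ ((j : ℕ) - 1) := pow_nonneg (norm_nonneg c) _
    have h6 := coefS_nonneg d lam j
    calc ‖coefB d lam z j‖ * ((j:ℝ) * ‖c‖ ^ ((j:ℕ) - 1))
        = (j:ℝ) * (‖coefB d lam z j‖ * ‖c‖ ^ ((j:ℕ) - 1)) := by ring
      _ ≤ (j:ℝ) * (coefS d lam j * ‖c‖ ^ (d - 2)) :=
          mul_le_mul_of_nonneg_left (mul_le_mul h3 h2 h5 h6) h4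
      _ = (j:ℝ) * coefS d lam j * ‖c‖ ^ (d - 2) := by ring
  have hd1 : ‖c‖ ^ (d - 1) = ‖c‖ ^ (d - 2) * ‖c‖ := by
    rw [← pow_succ]
    congr 1
    omega
  have hp : (0:ℝ) < ‖c‖ ^ (d - 2) := pow_pos (by linarith) _
  have hdl : (2 : ℝ) ≤ (d : ℝ) := by exact_mod_cast hd
  have h7 : (d:ℝ) * ‖c‖ * ‖c‖ ^ (d - 2) ≤ C * ‖c‖ ^ (d - 2) := by
    calc (d:ℝ) * ‖c‖ * ‖c‖ ^ (d - 2)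
        = (d:ℝ) * ‖c‖ ^ (d - 1) := by rw [hd1]; ring
      _ ≤ C * ‖c‖ ^ (d - 2) := habs
  have h8 : (d:ℝ) * ‖c‖ ≤ C := le_of_mul_le_mul_right h7 hp
  nlinarith

set_option maxHeartbeats 1000000 in
lemma exists_delta (d : ℕ) (hd : 2 ≤ d) (lam : Param d) (hE : NotInE d lam) :
    ∃ δ : ℝ, 0 < δ ∧ ∀ z c : ℂ, ‖z‖ = 1 → deriv (qpoly d lam z) c = 0 →
      δ ≤ ‖qpoly d lam z c‖ := by
  set K := {p : ℂ × ℂ | ‖p.1‖ = 1 ∧ deriv (qpoly d lam p.1) p.2 = 0} with hK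
  rcases Set.eq_empty_or_nonempty K with hKe | hne
  · refine ⟨1, one_pos, fun z c hz hc => ?_⟩
    exfalso
    have : (z, c) ∈ K := ⟨hz, hc⟩
    rw [hKe] at this
    exact this
  · have hclosed : IsClosed K := by
      have h1 : IsClosed {p : ℂ × ℂ | ‖p.1‖ = 1} :=
        isClosed_eq (continuous_norm.comp continuous_fst) continuous_const
      have h2 : IsClosed {p : ℂ × ℂ | deriv (qpoly d lam p.1) p.2 = 0} :=
        isClosed_eq (cont_qderiv d lam) continuous_const
      exact h1.inter h2
    have hbdd : Bornology.IsBounded K := by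
      set M := max 1 (∑ j : Fin (d - 1), (j : ℝ) * coefS d lam j)
      have hsub : K ⊆ Metric.closedBall (0:ℂ) 1 ×ˢ Metric.closedBall (0:ℂ) M := by
        rintro ⟨z, c⟩ ⟨hz, hc⟩
        constructor
        · simp [Metric.mem_closedBall, Complex.dist_eq]
          simp at hz
          rw [hz]
        · simp [Metric.mem_closedBall, Complex.dist_eq]
          exact crit_bound d hd lam z c hz hc
      exact (Metric.isBounded_closedBall.prod Metric.isBounded_closedBall).subset hsub
    have hcpt : IsCompact K := Metric.isCompact_of_isClosed_isBounded hclosed hbdd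
    have hcont : Continuous (fun p : ℂ × ℂ => ‖qpoly d lam p.1 p.2‖) :=
      continuous_norm.comp (cont_qpoly d lam)
    obtain ⟨p₀, hp₀, hmin⟩ := hcpt.exists_isMinOn hne hcont.continuousOn
    refine ⟨‖qpoly d lam p₀.1 p₀.2‖, ?_, ?_⟩
    · rcases hp₀ with ⟨hz0, hc0⟩
      have hne0 : qpoly d lam p₀.1 p₀.2 ≠ 0 := by
        intro h0
        exact hE p₀.1 hz0 p₀.2 ⟨h0, hc0⟩
      exact norm_pos_iff.mpr hne0
    · intro z c hz hc
      exact isMinOn_iff.mp hmin (z, c) ⟨hz, hc⟩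

lemma fmap_iterate (d : ℕ) (lam : Param d) (p : ℂ × ℂ) (n : ℕ) :
    (fmap d lam)^[n] p = (p.1 ^ d ^ n, Qit d lam p.1 n p.2) := by
  induction n with
  | zero => simp [Qit]
  | succ n ih =>
      rw [Function.iterate_succ_apply', ih]
      simp only [fmap, Qit]
      rw [← pow_mul, ← pow_succ]

/-- for `|t|` large, critical orbits stay far away, and
`S¹ × 𝔻_{R_{tλ₀}^α}` misses the closure of the postcritical set. -/
theorem postcritical_escape (d : ℕ) (hd : 2 ≤ d) (α : ℝ) (hα1 : 1 < α) (hα2 : α < d) :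
    ∃ Rstar : ℝ, 1 < Rstar ∧
      ∀ lam₀ : Param d, lam₀ ∈ Dset d → Rstar ≤ Rlam d lam₀ → NotInE d lam₀ →
        ∃ r : ℝ, 1 < r ∧
          ∀ t : ℂ, r ≤ ‖t‖ →
            (∀ n : ℕ, 1 ≤ n → ∀ z : ℂ, ‖z‖ = 1 → ∀ c : ℂ,
              deriv (qpoly d (t • lam₀) z) c = 0 →
                2 * Rlam d (t • lam₀) ^ α ≤ ‖Qit d (t • lam₀) z n c‖) ∧
            Disjoint
              {p : ℂ × ℂ | ‖p.1‖ = 1 ∧ ‖p.2‖ < Rlam d (t • lam₀) ^ α}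
              (closure (PostCrit d (t • lam₀))) := by
  refine ⟨2, one_lt_two, ?_⟩
  intro lam₀ _ hR₀ hE
  obtain ⟨δ, hδ, hδmin⟩ := exists_delta d hd lam₀ hE
  have hdα : (0:ℝ) < (d : ℝ) - α := by linarith
  set R₀ := Rlam d lam₀ with hR₀def
  set X : ℝ := 2 * R₀ ^ α / δ with hX
  set Y : ℝ := max 1 X with hYdef
  have hY1 : (1:ℝ) ≤ Y := le_max_left _ _
  set r : ℝ := max 2 (Y ^ ((d : ℝ) - α)⁻¹) with hrdef
  have hr2 : (2:ℝ) ≤ r := le_max_left _ _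
  refine ⟨r, by linarith, ?_⟩
  intro t ht
  have ht2 : (2:ℝ) ≤ ‖t‖ := le_trans hr2 ht
  have htpos : (0:ℝ) < ‖t‖ := by linarith
  have ht0 : t ≠ 0 := norm_pos_iff.mp htpos
  set R := Rlam d (t • lam₀) with hRdef
  have hRt : R = ‖t‖ * R₀ := Rlam_smul d t lam₀
  have hR4 : (4:ℝ) ≤ R := by rw [hRt]; nlinarith
  have hR1 : (1:ℝ) ≤ R := by linarith
  have hRα1 : (1:ℝ) ≤ R ^ α := Real.one_le_rpow hR1 (by linarith)
  have hRα : R ≤ R ^ α := by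
    calc R = R ^ (1:ℝ) := (Real.rpow_one R).symm
      _ ≤ R ^ α := Real.rpow_le_rpow_of_exponent_le hR1 hα1.le
  -- exponent estimate for |t|
  have htX : X ≤ ‖t‖ ^ ((d:ℝ) - α) := by
    have h1 : Y ^ ((d : ℝ) - α)⁻¹ ≤ ‖t‖ := le_trans (le_max_right _ _) ht
    have h0 : (0:ℝ) ≤ Y ^ ((d : ℝ) - α)⁻¹ := Real.rpow_nonneg (by linarith) _
    have h2 : (Y ^ ((d : ℝ) - α)⁻¹) ^ ((d:ℝ) - α) ≤ ‖t‖ ^ ((d:ℝ) - α) :=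
      Real.rpow_le_rpow h0 h1 hdα.le
    have h3 : (Y ^ ((d : ℝ) - α)⁻¹) ^ ((d:ℝ) - α) = Y := by
      rw [← Real.rpow_mul (by linarith : (0:ℝ) ≤ Y), inv_mul_cancel₀ hdα.ne', Real.rpow_one]
    calc X ≤ Y := le_max_right _ _
      _ = (Y ^ ((d : ℝ) - α)⁻¹) ^ ((d:ℝ) - α) := h3.symm
      _ ≤ ‖t‖ ^ ((d:ℝ) - α) := h2
  have hkey : 2 * R ^ α ≤ ‖t‖ ^ d * δ := by
    have hRαeq : R ^ α = ‖t‖ ^ α * R₀ ^ α := by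
      rw [hRt, Real.mul_rpow htpos.le (Rlam_nonneg d lam₀)]
    have htd : (‖t‖ : ℝ) ^ d = ‖t‖ ^ α * ‖t‖ ^ ((d:ℝ) - α) := by
      rw [← Real.rpow_add htpos α ((d:ℝ) - α)]
      rw [← Real.rpow_natCast (‖t‖) d]
      congr 1
      ring
    have htα : (0:ℝ) ≤ ‖t‖ ^ α := Real.rpow_nonneg htpos.le α
    calc 2 * R ^ α = ‖t‖ ^ α * (2 * R₀ ^ α) := by rw [hRαeq]; ring
      _ = ‖t‖ ^ α * (X * δ) := by rw [hX, div_mul_cancel₀ _ hδ.ne']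
      _ ≤ ‖t‖ ^ α * (‖t‖ ^ ((d:ℝ) - α) * δ) := by
          apply mul_le_mul_of_nonneg_left (mul_le_mul_of_nonneg_right htX hδ.le) htα
      _ = ‖t‖ ^ d * δ := by rw [htd]; ring
  -- main estimate
  have main : ∀ n : ℕ, 1 ≤ n → ∀ z : ℂ, ‖z‖ = 1 → ∀ c : ℂ,
      deriv (qpoly d (t • lam₀) z) c = 0 →
        2 * R ^ α ≤ ‖Qit d (t • lam₀) z n c‖ := by
    intro n hn z hz c hc
    set c₀ : ℂ := c / t with hc₀
    have hct : t * c₀ = c := by rw [mul_comm]; exact div_mul_cancel₀ c ht0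
    have hderiv0 : deriv (qpoly d lam₀ z) c₀ = 0 := by
      have h1 := qderiv_smul d hd t lam₀ z c₀
      rw [hct, hc] at h1
      have h2 := h1.symm
      rcases mul_eq_zero.mp h2 with h3 | h3
      · exact absurd h3 (pow_ne_zero _ ht0)
      · exact h3
    have hdelta := hδmin z c₀ hz hderiv0
    have hQ1 : Qit d (t • lam₀) z 1 c = qpoly d (t • lam₀) z c := by
      show qpoly d (t • lam₀) (z ^ d ^ 0) (Qit d (t • lam₀) z 0 c) = _
      rw [pow_zero, pow_one]
      rfl
    have habs1 : 2 * R ^ α ≤ ‖Qit d (t • lam₀) z 1 c‖ := by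
      rw [hQ1, ← hct, qpoly_smul, norm_mul, norm_pow]
      calc 2 * R ^ α ≤ ‖t‖ ^ d * δ := hkey
        _ ≤ ‖t‖ ^ d * ‖qpoly d lam₀ z c₀‖ :=
            mul_le_mul_of_nonneg_left hdelta (pow_nonneg htpos.le _)
    have hrec : ∀ m : ℕ, 2 * R ^ α ≤ ‖Qit d (t • lam₀) z (m + 1) c‖ := by
      intro m
      induction m with
      | zero => exact habs1
      | succ m ih =>
          have hz' : ‖z ^ d ^ (m + 1)‖ = 1 := by
            rw [norm_pow, hz, one_pow]
          have hw2 : (2:ℝ) ≤ ‖Qit d (t • lam₀) z (m + 1) c‖ := by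
            nlinarith
          have hwR : 2 * R ≤ ‖Qit d (t • lam₀) z (m + 1) c‖ := by
            nlinarith
          calc 2 * R ^ α ≤ ‖Qit d (t • lam₀) z (m + 1) c‖ := ih
            _ ≤ ‖qpoly d (t • lam₀) (z ^ d ^ (m + 1))
                  (Qit d (t • lam₀) z (m + 1) c)‖ :=
                grow d hd (t • lam₀) _ _ hz' hw2 hwR
            _ = ‖Qit d (t • lam₀) z (m + 2) c‖ := rfl
    obtain ⟨m, rfl⟩ : ∃ m, n = m + 1 := ⟨n - 1, by omega⟩
    exact hrec m
  refine ⟨main, ?_⟩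
  have hsub : PostCrit d (t • lam₀) ⊆ {p : ℂ × ℂ | 2 * R ^ α ≤ ‖p.2‖} := by
    rintro p hp
    simp only [PostCrit, Set.mem_iUnion, Set.mem_setOf_eq] at hp
    obtain ⟨n, hn, q, hqC, rfl⟩ := hp
    simpa [fmap_iterate] using main n hn q.1 hqC.1 q.2 hqC.2
  have hclosed : IsClosed {p : ℂ × ℂ | 2 * R ^ α ≤ ‖p.2‖} :=
    isClosed_le continuous_const (continuous_norm.comp continuous_snd)
  rw [Set.disjoint_left]
  intro p hp hpc
  have h1 : p ∈ {p : ℂ × ℂ | 2 * R ^ α ≤ ‖p.2‖} :=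
    (hclosed.closure_subset_iff.mpr hsub) hpc
  have h2 : ‖p.2‖ < R ^ α := hp.2
  have h3 : 2 * R ^ α ≤ ‖p.2‖ := h1
  nlinarith
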